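/- Let q be a prime power, let P ∈ 𝔽_q[x_1, …, x_n], let β ∈ ℤ_{≥0}^n, and let a ∈ 𝔽_q^n. Then mult(P^{(β)}, a) ≥ mult(P, a) − |β|, where P^{(β)} denotes the β-th Hasse derivative of P. -/

import Mathlib

/-- The `β`-th Hasse derivative of a multivariate polynomial `f`: the coefficient of
`y^β` in `f(x + y)`, as a polynomial in `x`. -/
noncomputable def hasseDeriv {m : ℕ} {F : Type*} [CommRing F]
    (β : Fin m →₀ ℕ) (f : MvPolynomial (Fin m) F) : MvPolynomial (Fin m) F :=
  MvPolynomial.coeff β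
    (MvPolynomial.eval₂ (MvPolynomial.C.comp MvPolynomial.C)
      (fun i => MvPolynomial.C (MvPolynomial.X i) + MvPolynomial.X i) f)

/-- The multiplicity of `f` at the point `a`: the supremum of all `M ∈ ℤ_{≥0}` such that
`f^{(β)}(a) = 0` for all `β` with `|β| < M`. -/
noncomputable def polyMult {m : ℕ} {F : Type*} [CommRing F]
    (f : MvPolynomial (Fin m) F) (a : Fin m → F) : ℕ∞ :=
  ⨆ M ∈ {M : ℕ | ∀ β : Fin m →₀ ℕ, (∑ i, β i) < M →
    MvPolynomial.eval a (hasseDeriv β f) = 0}, (M : ℕ∞)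

/-!
The Hasse derivative of a monomial is `D^β x^ν = binom(ν, β) x^(ν - β)` (coordinatewise
binomial coefficients, proved by induction on the polynomial via Pascal's rule). Together with
`binom(n, k) binom(k, s) = binom(n, s) binom(n - s, k - s)` this gives the composition rule
`D^γ D^β = binom(β + γ, β) D^(β + γ)`. So if all Hasse derivatives of `P` of order `< M` vanish
at `a`, then all Hasse derivatives of `D^β P` of order `< M - |β|` vanish there as well.
-/

open MvPolynomial Finsupp

section MultiChoose

variable {σ : Type*} [Fintype σ]

def multiChoose (ν β : σ →₀ ℕ) : ℕ := ∏ j, (ν j).choose (β j)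

lemma multiChoose_eq_mul_prod_erase [DecidableEq σ] (ν β : σ →₀ ℕ) (i : σ) :
    multiChoose ν β = (ν i).choose (β i) * ∏ j ∈ Finset.univ.erase i, (ν j).choose (β j) :=
  (Finset.mul_prod_erase _ _ (Finset.mem_univ i)).symm

lemma multiChoose_add_single_add_single [DecidableEq σ] (ν β : σ →₀ ℕ) (i : σ) (k l : ℕ) :
    multiChoose (ν + single i k) (β + single i l) =
      (ν i + k).choose (β i + l) * ∏ j ∈ Finset.univ.erase i, (ν j).choose (β j) := by
  rw [multiChoose_eq_mul_prod_erase _ _ i]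
  congr 1
  · simp
  · refine Finset.prod_congr rfl fun j hj => ?_
    simp [Ne.symm (Finset.ne_of_mem_erase hj)]

lemma multiChoose_add_single_left (ν β : σ →₀ ℕ) (i : σ) (hβ : β i = 0) :
    multiChoose (ν + single i 1) β = multiChoose ν β := by
  classical
  simpa [multiChoose_eq_mul_prod_erase ν β i, hβ] using
    multiChoose_add_single_add_single ν β i 1 0

lemma multiChoose_add_single_of_eq (ν β : σ →₀ ℕ) (i : σ) (h : ν i = β i) :
    multiChoose (ν + single i 1) (β + single i 1) = multiChoose ν β := by
  classical
  simp [multiChoose_add_single_add_single, multiChoose_eq_mul_prod_erase ν β i, h]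

lemma multiChoose_succ_succ (ν β : σ →₀ ℕ) (i : σ) :
    multiChoose (ν + single i 1) (β + single i 1) =
      multiChoose ν β + multiChoose ν (β + single i 1) := by
  classical
  have h := multiChoose_add_single_add_single ν β i 0 1
  simp only [single_zero, add_zero] at h
  rw [multiChoose_add_single_add_single, multiChoose_eq_mul_prod_erase ν β i, h,
    Nat.choose_succ_succ', add_mul]

lemma multiChoose_mul_multiChoose (δ β γ : σ →₀ ℕ) :
    multiChoose (δ + γ) γ * multiChoose (δ + γ + β) β =
      multiChoose (β + γ) β * multiChoose (δ + (β + γ)) (β + γ) := by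
  simp only [multiChoose, ← Finset.prod_mul_distrib, Finsupp.coe_add, Pi.add_apply]
  refine Finset.prod_congr rfl fun j _ => ?_
  have h := Nat.choose_mul (n := δ j + (β j + γ j)) (Nat.le_add_right (β j) (γ j))
  rw [Nat.add_sub_cancel_left, show δ j + (β j + γ j) - β j = δ j + γ j by omega] at h
  rw [mul_comm, show δ j + γ j + β j = δ j + (β j + γ j) by omega, ← h, mul_comm]

end MultiChoose

lemma Finsupp.exists_eq_add_single_of_ne_zero {σ : Type*} {δ : σ →₀ ℕ} {i : σ} (h : δ i ≠ 0) :
    ∃ δ', δ = δ' + single i 1 :=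
  ⟨δ - single i 1, (sub_add_single_one_cancel h).symm⟩

section HasseDeriv

variable {m : ℕ} {R : Type*} [CommRing R]

lemma hasseDeriv_C (β : Fin m →₀ ℕ) (c : R) :
    hasseDeriv β (C c : MvPolynomial (Fin m) R) = if β = 0 then C c else 0 := by
  simp [hasseDeriv, coeff_C, eq_comm]

lemma hasseDeriv_add (β : Fin m →₀ ℕ) (p q : MvPolynomial (Fin m) R) :
    hasseDeriv β (p + q) = hasseDeriv β p + hasseDeriv β q := by
  simp [hasseDeriv]

lemma hasseDeriv_mul_X_of_eq_zero {β : Fin m →₀ ℕ} {i : Fin m} (hβ : β i = 0)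
    (p : MvPolynomial (Fin m) R) : hasseDeriv β (p * X i) = hasseDeriv β p * X i := by
  classical
  simp [hasseDeriv, mul_add, coeff_mul_X', hβ, mul_comm _ (C (X i)), coeff_C_mul, mul_comm (X i)]

lemma hasseDeriv_add_single_mul_X (β : Fin m →₀ ℕ) (i : Fin m) (p : MvPolynomial (Fin m) R) :
    hasseDeriv (β + single i 1) (p * X i) =
      hasseDeriv (β + single i 1) p * X i + hasseDeriv β p := by
  simp [hasseDeriv, mul_add, mul_comm _ (C (X i)), coeff_C_mul, mul_comm (X i)]

lemma coeff_mul_X_of_eq_zero {δ : Fin m →₀ ℕ} {i : Fin m} (hδ : δ i = 0)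
    (p : MvPolynomial (Fin m) R) : coeff δ (p * X i) = 0 := by
  classical
  simp [coeff_mul_X', hδ]

theorem coeff_hasseDeriv (β δ : Fin m →₀ ℕ) (f : MvPolynomial (Fin m) R) :
    coeff δ (hasseDeriv β f) = multiChoose (δ + β) β * coeff (δ + β) f := by
  induction f using MvPolynomial.induction_on generalizing β δ with
  | C c =>
    rw [hasseDeriv_C]
    by_cases hβ : β = 0
    · subst hβ
      simp [multiChoose]
    · have hδβ : δ + β ≠ 0 := fun h => hβ (add_eq_zero.mp h).2
      simp [hβ, coeff_C, Ne.symm hδβ]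
  | add p q hp hq => simp [hasseDeriv_add, hp, hq, mul_add]
  | mul_X p i ih =>
    rcases eq_or_ne (δ i) 0 with hδ | hδ <;> rcases eq_or_ne (β i) 0 with hβ | hβ
    · rw [hasseDeriv_mul_X_of_eq_zero hβ, coeff_mul_X_of_eq_zero hδ,
        coeff_mul_X_of_eq_zero (by simp [hδ, hβ]), mul_zero]
    · obtain ⟨β, rfl⟩ := exists_eq_add_single_of_ne_zero hβ
      rw [hasseDeriv_add_single_mul_X, coeff_add, coeff_mul_X_of_eq_zero hδ, zero_add, ih,
        ← add_assoc, coeff_mul_X, multiChoose_add_single_of_eq _ _ _ (by simp [hδ])]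
    · obtain ⟨δ, rfl⟩ := exists_eq_add_single_of_ne_zero hδ
      rw [hasseDeriv_mul_X_of_eq_zero hβ, coeff_mul_X, ih, add_right_comm, coeff_mul_X,
        multiChoose_add_single_left _ _ _ hβ]
    · obtain ⟨δ, rfl⟩ := exists_eq_add_single_of_ne_zero hδ
      obtain ⟨β, rfl⟩ := exists_eq_add_single_of_ne_zero hβ
      rw [hasseDeriv_add_single_mul_X, coeff_add, coeff_mul_X, ih, ih, ← add_assoc,
        add_right_comm δ _ β, ← add_assoc (δ + _), add_right_comm δ, coeff_mul_X,
        multiChoose_succ_succ, Nat.cast_add, add_mul, add_comm]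

theorem hasseDeriv_hasseDeriv (β γ : Fin m →₀ ℕ) (f : MvPolynomial (Fin m) R) :
    hasseDeriv γ (hasseDeriv β f) = multiChoose (β + γ) β • hasseDeriv (β + γ) f := by
  ext δ
  rw [coeff_smul, coeff_hasseDeriv, coeff_hasseDeriv, coeff_hasseDeriv, nsmul_eq_mul,
    ← mul_assoc, ← Nat.cast_mul, multiChoose_mul_multiChoose, Nat.cast_mul, mul_assoc,
    add_right_comm, add_assoc]

end HasseDeriv

lemma le_polyMult {m : ℕ} {R : Type*} [CommRing R] {f : MvPolynomial (Fin m) R}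
    {a : Fin m → R} {M : ℕ}
    (h : ∀ β : Fin m →₀ ℕ, ∑ i, β i < M → eval a (hasseDeriv β f) = 0) :
    (M : ℕ∞) ≤ polyMult f a :=
  le_iSup₂ (f := fun (k : ℕ) _ => (k : ℕ∞)) M h

theorem polyMult_hasseDeriv_ge_general {F : Type*} [Field F] (n : ℕ)
    (P : MvPolynomial (Fin n) F) (β : Fin n →₀ ℕ) (a : Fin n → F) :
    polyMult P a - ((∑ i, β i : ℕ) : ℕ∞) ≤ polyMult (hasseDeriv β P) a := by
  rw [tsub_le_iff_right]
  refine iSup₂_le fun M hM => ?_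
  have hle : ((M - ∑ i, β i : ℕ) : ℕ∞) ≤ polyMult (hasseDeriv β P) a := by
    refine le_polyMult fun γ hγ => ?_
    have hβγ : ∑ i, (β + γ) i < M := by
      simp only [Finsupp.coe_add, Pi.add_apply, Finset.sum_add_distrib]
      omega
    rw [hasseDeriv_hasseDeriv, map_nsmul, hM _ hβγ, smul_zero]
  calc (M : ℕ∞) ≤ ((M - ∑ i, β i : ℕ) : ℕ∞) + ((∑ i, β i : ℕ) : ℕ∞) := by
        exact_mod_cast le_tsub_add
    _ ≤ _ := add_le_add_left hle _

/-- `mult(P^{(β)}, a) ≥ mult(P, a) - |β|`. -/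
theorem polyMult_hasseDeriv_ge {F : Type*} [Field F] [Fintype F]
    (q n : ℕ) (hq : IsPrimePow q) (hcard : Fintype.card F = q)
    (P : MvPolynomial (Fin n) F) (β : Fin n →₀ ℕ) (a : Fin n → F) :
    polyMult P a - ((∑ i, β i : ℕ) : ℕ∞) ≤ polyMult (hasseDeriv β P) a :=
  polyMult_hasseDeriv_ge_general n P β a
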